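/- arXiv:2004.09241 — 3 statements merged into one kernel-verified Lean document; each statement's English description precedes it below -/
import Mathlib

section
/- (Normal-ordering / Wick relation, eq. (3.24) of the paper.) For all finite multisets μ, ν of positive integers one has the operator identity on P: a_ν ∘ a*_μ = ∑_{λ ⊆ ν ∩ μ} ξ_λ · a*_{μ∖λ} ∘ a_{ν∖λ}, where the sum runs over all submultisets λ of the multiset intersection ν ∩ μ and ξ_λ := (1/m(λ)!) ∏_{r∈λ} κ'_r. -/
open MvPolynomial

noncomputable section

set_option linter.unusedSectionVars false

variable (F : Type*) [Field F] [CharZero F]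

abbrev PP (F : Type*) [Field F] : Type _ := MvPolynomial ℕ+ F

/-- `a_{-r}`: multiplication by `X r`. -/
def aNeg (r : ℕ+) : Module.End F (PP F) := LinearMap.mulLeft F (X r)

/-- `a_r := κ'_r • ∂/∂X_r`. -/
def aPos (κ : ℕ+ → F) (r : ℕ+) : Module.End F (PP F) :=
  κ r • ((pderiv r : Derivation F (PP F) (PP F)) : Module.End F (PP F))

lemma aNeg_commute (i j : ℕ+) : Commute (aNeg F i) (aNeg F j) := by
  apply LinearMap.ext
  intro p
  simp [aNeg, Module.End.mul_apply, mul_left_comm]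

lemma pderiv_commute (i j : ℕ+) :
    Commute ((pderiv i : Derivation F (PP F) (PP F)) : Module.End F (PP F))
      ((pderiv j : Derivation F (PP F) (PP F)) : Module.End F (PP F)) := by
  have h : (⁅(pderiv i : Derivation F (PP F) (PP F)),
      (pderiv j : Derivation F (PP F) (PP F))⁆ : Derivation F (PP F) (PP F)) = 0 := by
    apply derivation_ext
    intro k
    simp only [Derivation.commutator_apply, pderiv_X, Pi.single_apply, Derivation.zero_apply]
    split_ifs <;> simp
  have h2 : (⁅((pderiv i : Derivation F (PP F) (PP F)) : Module.End F (PP F)),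
      ((pderiv j : Derivation F (PP F) (PP F)) : Module.End F (PP F))⁆ : Module.End F (PP F)) = 0 := by
    rw [← Derivation.commutator_coe_linear_map, h]
    rfl
  rw [Ring.lie_def] at h2
  exact sub_eq_zero.mp h2

lemma aPos_commute (κ : ℕ+ → F) (i j : ℕ+) : Commute (aPos F κ i) (aPos F κ j) :=
  ((pderiv_commute F i j).smul_left (κ i)).smul_right (κ j)

/-- Product of a pairwise-commuting family of operators over a multiset. -/
def opProd {M : Type*} [Monoid M] (f : ℕ+ → M) (hf : ∀ i j, Commute (f i) (f j))
    (μ : Multiset ℕ+) : M :=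
  (μ.map f).noncommProd (by
    intro x hx y hy _
    obtain ⟨i, _, rfl⟩ := Multiset.mem_map.mp hx
    obtain ⟨j, _, rfl⟩ := Multiset.mem_map.mp hy
    exact hf i j)

/-- `m(μ)! := ∏_r m_r(μ)!`, the product of factorials of part multiplicities. -/
def mfact (μ : Multiset ℕ+) : ℕ := (μ.dedup.map fun r => (μ.count r).factorial).prod

/-- `|μ|`: the weight (sum of the parts) of `μ`. -/
def msum (μ : Multiset ℕ+) : ℕ := (μ.map fun r => (r : ℕ)).sum

/-- The multiset binomial coefficient `[μ ⫶ ν]`. -/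
def mbinom (μ ν : Multiset ℕ+) : F :=
  if ν ≤ μ then (mfact μ : F) / ((mfact (μ - ν) : F) * (mfact ν : F)) else 0

/-- `a*_μ := (1/m(μ)!) ∏_{r∈μ} a_{-r}`. -/
def aStar (μ : Multiset ℕ+) : Module.End F (PP F) :=
  ((mfact μ : F))⁻¹ • opProd (aNeg F) (aNeg_commute F) μ

/-- `a_μ := (1/m(μ)!) ∏_{r∈μ} a_r`. -/
def aLow (κ : ℕ+ → F) (μ : Multiset ℕ+) : Module.End F (PP F) :=
  ((mfact μ : F))⁻¹ • opProd (aPos F κ) (aPos_commute F κ) μ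

/-- `ξ_λ := (1/m(λ)!) ∏_{r∈λ} κ'_r`. -/
def xiCoef (κ : ℕ+ → F) (lam : Multiset ℕ+) : F :=
  ((mfact lam : F))⁻¹ * (lam.map κ).prod


/-!
Induction on `ν`. Since `a_{r ::ₘ ν} = (m_r(ν) + 1)⁻¹ a_r a_ν`, it suffices to move one
annihilator `a_r` through each summand `ξ_λ a*_{μ∖λ} a_{ν∖λ}`. The canonical commutation relation
gives `a_r a*_σ = a*_σ a_r + κ'_r a*_{σ∖r}` for `r ∈ σ`: the first term feeds the summand `λ`
of the expansion for `r ::ₘ ν` with weight `m_r((r ::ₘ ν)∖λ)`, the second feeds the summand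
`r ::ₘ λ` with weight `m_r(r ::ₘ λ)`. The two weights add up to `m_r(r ::ₘ ν) = m_r(ν) + 1`,
which cancels the normalisation.
-/

section MultisetSums

open Finset

variable {α M : Type*} [DecidableEq α] [AddCommMonoid M]

theorem Multiset.mem_toFinset_powerset_inter {s t u : Multiset α} :
    u ∈ (s ∩ t).powerset.toFinset ↔ u ≤ s ∧ u ≤ t := by
  rw [Multiset.mem_toFinset, Multiset.mem_powerset, Multiset.le_inter_iff]

theorem Multiset.le_of_le_cons_of_count_le {s t : Multiset α} {a : α} (h : s ≤ a ::ₘ t)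
    (ha : s.count a ≤ t.count a) : s ≤ t := by
  rw [Multiset.le_iff_count] at h ⊢
  intro b
  by_cases hb : b = a
  · exact hb ▸ ha
  · simpa [Multiset.count_cons_of_ne hb] using h b

theorem Multiset.cons_le_iff_mem_sub {s t : Multiset α} (a : α) (h : s ≤ t) :
    a ::ₘ s ≤ t ↔ a ∈ t - s := by
  rw [← Multiset.singleton_le, ← Multiset.singleton_add, le_tsub_iff_right h]

theorem sum_powerset_inter_count_cons_sub (s t : Multiset α) (a : α) (f : Multiset α → M) :
    ∑ u ∈ (s ∩ t).powerset.toFinset, (a ::ₘ s - u).count a • f u =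
      ∑ u ∈ ((a ::ₘ s) ∩ t).powerset.toFinset, (a ::ₘ s - u).count a • f u := by
  refine sum_subset (fun u hu => ?_) (fun u hu hus => ?_)
  · obtain ⟨hs, ht⟩ := Multiset.mem_toFinset_powerset_inter.mp hu
    exact Multiset.mem_toFinset_powerset_inter.mpr ⟨hs.trans (Multiset.le_cons_self s a), ht⟩
  · obtain ⟨hs, ht⟩ := Multiset.mem_toFinset_powerset_inter.mp hu
    suffices (a ::ₘ s - u).count a = 0 by rw [this, zero_smul]
    by_contra hne
    refine hus (Multiset.mem_toFinset_powerset_inter.mpr ⟨?_, ht⟩)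
    refine Multiset.le_of_le_cons_of_count_le hs ?_
    rw [Multiset.count_sub, Multiset.count_cons_self] at hne
    omega

theorem sum_powerset_inter_ite_mem_sub (s t : Multiset α) (a : α) (f : Multiset α → M) :
    ∑ u ∈ (s ∩ t).powerset.toFinset, (if a ∈ t - u then (a ::ₘ u).count a • f (a ::ₘ u) else 0) =
      ∑ u ∈ ((a ::ₘ s) ∩ t).powerset.toFinset, u.count a • f u := by
  have hdrop : ∀ u ∈ ((a ::ₘ s) ∩ t).powerset.toFinset,
      (if a ∈ u then u.count a • f u else 0) = u.count a • f u := fun u _ => by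
    split_ifs with ha
    · rfl
    · rw [Multiset.count_eq_zero_of_notMem ha, zero_smul]
  rw [← sum_congr rfl hdrop, ← sum_filter, ← sum_filter]
  refine sum_nbij' (Multiset.cons a) (Multiset.erase · a) (fun u hu => ?_) (fun u hu => ?_)
    (fun u _ => Multiset.erase_cons_head a u) (fun u hu => ?_) (fun _ _ => rfl)
  · simp only [mem_filter, Multiset.mem_toFinset_powerset_inter] at hu ⊢
    obtain ⟨⟨hs, ht⟩, hat⟩ := hu
    exact ⟨⟨Multiset.cons_le_cons a hs, (Multiset.cons_le_iff_mem_sub a ht).mpr hat⟩,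
      Multiset.mem_cons_self a u⟩
  · simp only [mem_filter, Multiset.mem_toFinset_powerset_inter] at hu ⊢
    obtain ⟨⟨hs, ht⟩, hau⟩ := hu
    have hle : u.erase a ≤ t := (Multiset.erase_le a u).trans ht
    refine ⟨⟨Multiset.erase_le_iff_le_cons.mpr hs, hle⟩, ?_⟩
    rwa [← Multiset.cons_le_iff_mem_sub a hle, Multiset.cons_erase hau]
  · rw [mem_filter] at hu
    exact Multiset.cons_erase hu.2

theorem sum_powerset_inter_cons (s t : Multiset α) (a : α) (f : Multiset α → M) :
    ∑ u ∈ (s ∩ t).powerset.toFinset, ((a ::ₘ s - u).count a • f u +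
        if a ∈ t - u then (a ::ₘ u).count a • f (a ::ₘ u) else 0) =
      (s.count a + 1) • ∑ u ∈ ((a ::ₘ s) ∩ t).powerset.toFinset, f u := by
  rw [sum_add_distrib, sum_powerset_inter_count_cons_sub, sum_powerset_inter_ite_mem_sub,
    ← sum_add_distrib, smul_sum]
  refine sum_congr rfl fun u hu => ?_
  have hcount : u.count a ≤ (a ::ₘ s).count a :=
    Multiset.count_le_of_le a (Multiset.mem_toFinset_powerset_inter.mp hu).1
  rw [← add_smul, Multiset.count_sub, Nat.sub_add_cancel hcount, Multiset.count_cons_self]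

end MultisetSums

section Operators

open Finset

variable {F}

lemma opProd_cons {M : Type*} [Monoid M] (f : ℕ+ → M) (hf : ∀ i j, Commute (f i) (f j))
    (r : ℕ+) (σ : Multiset ℕ+) : opProd f hf (r ::ₘ σ) = f r * opProd f hf σ := by
  simp [opProd, Multiset.noncommProd_cons]

lemma mfact_eq_prod_of_subset {σ : Multiset ℕ+} {s : Finset ℕ+} (h : σ.toFinset ⊆ s) :
    mfact σ = ∏ x ∈ s, (σ.count x).factorial :=
  prod_subset h fun x _ hx => by
    rw [Multiset.count_eq_zero_of_notMem (by simpa using hx), Nat.factorial_zero]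

lemma mfact_cons (r : ℕ+) (σ : Multiset ℕ+) : mfact (r ::ₘ σ) = (σ.count r + 1) * mfact σ := by
  have hr : r ∈ insert r σ.toFinset := mem_insert_self r _
  rw [mfact_eq_prod_of_subset (s := insert r σ.toFinset) (by simp),
    mfact_eq_prod_of_subset (subset_insert r _), ← mul_prod_erase _ _ hr,
    ← mul_prod_erase _ _ hr, Multiset.count_cons_self, Nat.factorial_succ, mul_assoc]
  congr 2
  exact prod_congr rfl fun x hx => by rw [Multiset.count_cons_of_ne (ne_of_mem_erase hx)]

lemma mfact_eq_count_mul_mfact_erase {r : ℕ+} {σ : Multiset ℕ+} (hr : r ∈ σ) :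
    mfact σ = σ.count r * mfact (σ.erase r) := by
  have h := mfact_cons r (σ.erase r)
  rwa [← Multiset.count_cons_self, Multiset.cons_erase hr] at h

lemma mfact_cast_ne_zero (σ : Multiset ℕ+) : (mfact σ : F) ≠ 0 := by
  rw [Nat.cast_ne_zero, mfact_eq_prod_of_subset subset_rfl]
  exact prod_ne_zero_iff.mpr fun x _ => Nat.factorial_ne_zero _

lemma aPos_mul_aNeg (κ : ℕ+ → F) (r s : ℕ+) :
    aPos F κ r * aNeg F s = aNeg F s * aPos F κ r + (if r = s then κ r else 0) • 1 := by
  refine LinearMap.ext fun p => ?_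
  simp only [aPos, aNeg, LinearMap.add_apply, Module.End.mul_apply, LinearMap.smul_apply,
    LinearMap.mulLeft_apply, Module.End.one_apply, Derivation.coeFn_coe, Derivation.leibniz,
    smul_eq_mul, pderiv_X]
  by_cases h : r = s
  · subst h
    simp
  · simp [h]

lemma aPos_mul_opProd_aNeg (κ : ℕ+ → F) (r : ℕ+) (σ : Multiset ℕ+) :
    aPos F κ r * opProd (aNeg F) (aNeg_commute F) σ =
      opProd (aNeg F) (aNeg_commute F) σ * aPos F κ r +
        ((σ.count r : F) * κ r) • opProd (aNeg F) (aNeg_commute F) (σ.erase r) := by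
  induction σ using Multiset.induction with
  | empty => simp [opProd]
  | cons s σ ih =>
    rw [opProd_cons, ← mul_assoc, aPos_mul_aNeg, add_mul, mul_assoc, ih, mul_add, ← mul_assoc,
      ← opProd_cons, mul_smul_comm, smul_mul_assoc, one_mul]
    rcases eq_or_ne r s with rfl | hrs
    · rw [Multiset.erase_cons_head, Multiset.count_cons_self, if_pos rfl]
      by_cases hr : r ∈ σ
      · rw [← opProd_cons, Multiset.cons_erase hr]
        push_cast
        module
      · rw [Multiset.count_eq_zero_of_notMem hr]
        push_cast
        module
    · rw [Multiset.erase_cons_tail _ (Ne.symm hrs), Multiset.count_cons_of_ne hrs, if_neg hrs,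
        opProd_cons (σ := σ.erase r), zero_smul, add_zero]

lemma aPos_mul_aStar (κ : ℕ+ → F) (r : ℕ+) (σ : Multiset ℕ+) :
    aPos F κ r * aStar F σ =
      aStar F σ * aPos F κ r + if r ∈ σ then κ r • aStar F (σ.erase r) else 0 := by
  rw [aStar, mul_smul_comm, aPos_mul_opProd_aNeg, smul_add, smul_mul_assoc]
  congr 1
  split_ifs with hr
  · have hcount : (σ.count r : F) ≠ 0 := Nat.cast_ne_zero.mpr (Multiset.count_ne_zero.mpr hr)
    rw [aStar, smul_smul, smul_smul, mfact_eq_count_mul_mfact_erase hr]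
    congr 1
    push_cast
    field_simp [mfact_cast_ne_zero]
  · rw [Multiset.count_eq_zero_of_notMem hr, Nat.cast_zero, zero_mul, zero_smul, smul_zero]

lemma aPos_mul_aLow (κ : ℕ+ → F) (r : ℕ+) (σ : Multiset ℕ+) :
    aPos F κ r * aLow F κ σ = ((σ.count r : F) + 1) • aLow F κ (r ::ₘ σ) := by
  rw [aLow, aLow, mfact_cons, mul_smul_comm, opProd_cons, smul_smul]
  congr 1
  have hcount : (σ.count r : F) + 1 ≠ 0 := Nat.cast_add_one_ne_zero _
  push_cast
  field_simp [mfact_cast_ne_zero]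

lemma xiCoef_mul (κ : ℕ+ → F) (r : ℕ+) (lam : Multiset ℕ+) :
    xiCoef F κ lam * κ r = ((r ::ₘ lam).count r : F) * xiCoef F κ (r ::ₘ lam) := by
  have hcount : (lam.count r : F) + 1 ≠ 0 := Nat.cast_add_one_ne_zero _
  rw [xiCoef, xiCoef, mfact_cons, Multiset.map_cons, Multiset.prod_cons, Multiset.count_cons_self]
  push_cast
  field_simp [mfact_cast_ne_zero]

def wickTerm (κ : ℕ+ → F) (μ ν lam : Multiset ℕ+) : Module.End F (PP F) :=
  xiCoef F κ lam • (aStar F (μ - lam) * aLow F κ (ν - lam))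

lemma aPos_mul_wickTerm (κ : ℕ+ → F) (r : ℕ+) {μ ν lam : Multiset ℕ+} (h : lam ≤ ν) :
    aPos F κ r * wickTerm κ μ ν lam =
      (r ::ₘ ν - lam).count r • wickTerm κ μ (r ::ₘ ν) lam +
        if r ∈ μ - lam then (r ::ₘ lam).count r • wickTerm κ μ (r ::ₘ ν) (r ::ₘ lam) else 0 := by
  rw [wickTerm, mul_smul_comm, ← mul_assoc, aPos_mul_aStar, add_mul, mul_assoc, aPos_mul_aLow,
    smul_add]
  congr 1
  · rw [wickTerm, Multiset.cons_sub_of_le r h, Multiset.count_cons_self, ← Nat.cast_smul_eq_nsmul F,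
      Nat.cast_add_one, mul_smul_comm, smul_comm]
  · split_ifs
    · have hμ : (μ - lam).erase r = μ - r ::ₘ lam := by
        rw [Multiset.sub_cons, ← Multiset.sub_singleton, ← Multiset.sub_singleton, tsub_right_comm]
      rw [wickTerm, Multiset.sub_cons r (r ::ₘ ν), Multiset.erase_cons_head, hμ,
        ← Nat.cast_smul_eq_nsmul F, smul_smul, ← xiCoef_mul, smul_mul_assoc, smul_smul, mul_comm]
    · rw [zero_mul, smul_zero]

end Operators

/-- normal-ordering / Wick relation, eq. (3.24) of the paper:
`a_ν ∘ a*_μ = ∑_{λ ⊆ ν ∩ μ} ξ_λ · a*_{μ∖λ} ∘ a_{ν∖λ}`, where the sum runs over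
all submultisets `λ` of the multiset intersection `ν ∩ μ`. -/
theorem statement2 (F : Type*) [Field F] [CharZero F] (κ : ℕ+ → F)
    (μ ν : Multiset ℕ+) :
    aLow F κ ν * aStar F μ =
      ∑ lam ∈ ((ν ∩ μ).powerset.toFinset),
        xiCoef F κ lam • (aStar F (μ - lam) * aLow F κ (ν - lam)) := by
  change _ = ∑ lam ∈ _, wickTerm κ μ ν lam
  induction ν using Multiset.induction with
  | empty => simp [wickTerm, aLow, xiCoef, opProd, mfact]
  | cons r ν ih =>
    have hcount : (ν.count r : F) + 1 ≠ 0 := Nat.cast_add_one_ne_zero _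
    calc aLow F κ (r ::ₘ ν) * aStar F μ
        = ((ν.count r : F) + 1)⁻¹ • (aPos F κ r * (aLow F κ ν * aStar F μ)) := by
          rw [← mul_assoc, aPos_mul_aLow, smul_mul_assoc, inv_smul_smul₀ hcount]
      _ = ((ν.count r : F) + 1)⁻¹ • ((ν.count r + 1) •
            ∑ lam ∈ ((r ::ₘ ν) ∩ μ).powerset.toFinset, wickTerm κ μ (r ::ₘ ν) lam) := by
          rw [ih, Finset.mul_sum, ← sum_powerset_inter_cons]
          refine congrArg _ (Finset.sum_congr rfl fun lam hlam => ?_)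
          exact aPos_mul_wickTerm κ r (Multiset.mem_toFinset_powerset_inter.mp hlam).1
      _ = _ := by
          rw [← Nat.cast_smul_eq_nsmul F, Nat.cast_add_one, inv_smul_smul₀ hcount]
end
end

section
/- (Proposition 4.3 of the paper, finite-support form: the reduced R-matrix is expressed through the c-Heisenberg operators alone.) Assume q ∈ F is invertible. Let G(μ,ν) ∈ F be a finitely supported family indexed by pairs of finite multisets of positive integers, and define F(μ,ρ,ν,σ) := (−1)^{ℓ(ρ)+ℓ(σ)} q^{|ρ|+|σ|} G(μ ∪ ρ, ν ∪ σ). Then one has the operator identity on P ⊗_F P: ∑_{μ,ρ,ν,σ} F(μ,ρ,ν,σ) · (a*_μ ∘ a_ν) ⊗ (a*_ρ ∘ a_σ) = ∑_{μ,ν} q^{|μ|+|ν|} G(μ,ν) · c*_μ ∘ c_ν. -/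
open MvPolynomial

noncomputable section

set_option linter.unusedSectionVars false

variable (F : Type*) [Field F] [CharZero F]

open scoped TensorProduct

/-- `f ⊗ id` acting on `P ⊗ P`. -/
def op1 (f : Module.End F (PP F)) : Module.End F (PP F ⊗[F] PP F) :=
  TensorProduct.map f LinearMap.id

/-- `id ⊗ g` acting on `P ⊗ P`. -/
def op2 (g : Module.End F (PP F)) : Module.End F (PP F ⊗[F] PP F) :=
  TensorProduct.map LinearMap.id g

lemma op1_mul (f f' : Module.End F (PP F)) : op1 F (f * f') = op1 F f * op1 F f' := by
  simp only [op1, Module.End.mul_eq_comp, ← TensorProduct.map_comp, LinearMap.comp_id]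

lemma op2_mul (g g' : Module.End F (PP F)) : op2 F (g * g') = op2 F g * op2 F g' := by
  simp only [op2, Module.End.mul_eq_comp, ← TensorProduct.map_comp, LinearMap.comp_id]

lemma op1_op2_commute (f g : Module.End F (PP F)) : Commute (op1 F f) (op2 F g) := by
  unfold op1 op2
  rw [Commute, SemiconjBy, Module.End.mul_eq_comp, Module.End.mul_eq_comp,
    ← TensorProduct.map_comp, ← TensorProduct.map_comp]
  simp

lemma op1_commute {f f' : Module.End F (PP F)} (h : Commute f f') :
    Commute (op1 F f) (op1 F f') := by
  rw [Commute, SemiconjBy, ← op1_mul, ← op1_mul, h.eq]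

lemma op2_commute {g g' : Module.End F (PP F)} (h : Commute g g') :
    Commute (op2 F g) (op2 F g') := by
  rw [Commute, SemiconjBy, ← op2_mul, ← op2_mul, h.eq]

variable (q : F)

/-- `b_r := a_r ⊗ id + q^{-r} (id ⊗ a_r)`. -/
def bPos (κ : ℕ+ → F) (r : ℕ+) : Module.End F (PP F ⊗[F] PP F) :=
  op1 F (aPos F κ r) + (q⁻¹) ^ (r : ℕ) • op2 F (aPos F κ r)

/-- `b_{-r} := a_{-r} ⊗ id + q^{-r} (id ⊗ a_{-r})`. -/
def bNeg (r : ℕ+) : Module.End F (PP F ⊗[F] PP F) :=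
  op1 F (aNeg F r) + (q⁻¹) ^ (r : ℕ) • op2 F (aNeg F r)

/-- `c_r := q^{-r} (a_r ⊗ id) - id ⊗ a_r`. -/
def cPos (κ : ℕ+ → F) (r : ℕ+) : Module.End F (PP F ⊗[F] PP F) :=
  (q⁻¹) ^ (r : ℕ) • op1 F (aPos F κ r) - op2 F (aPos F κ r)

/-- `c_{-r} := q^{-r} (a_{-r} ⊗ id) - id ⊗ a_{-r}`. -/
def cNeg (r : ℕ+) : Module.End F (PP F ⊗[F] PP F) :=
  (q⁻¹) ^ (r : ℕ) • op1 F (aNeg F r) - op2 F (aNeg F r)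

lemma commute_aux {A B C D : Module.End F (PP F ⊗[F] PP F)} {x y : F}
    (hAC : Commute A C) (hAD : Commute A D) (hBC : Commute B C) (hBD : Commute B D) :
    Commute (x • A - B) (y • C - D) := by
  have eAC := LinearMap.congr_fun hAC.eq
  have eAD := LinearMap.congr_fun hAD.eq
  have eBC := LinearMap.congr_fun hBC.eq
  have eBD := LinearMap.congr_fun hBD.eq
  simp only [Module.End.mul_apply] at eAC eAD eBC eBD
  rw [Commute, SemiconjBy]
  apply LinearMap.ext
  intro v
  simp only [Module.End.mul_apply, LinearMap.sub_apply, LinearMap.smul_apply, map_sub, map_smul,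
    eAC, eAD, eBC, eBD]
  simp only [smul_sub, smul_comm y x]
  abel

lemma cNeg_commute (i j : ℕ+) : Commute (cNeg F q i) (cNeg F q j) := by
  unfold cNeg
  exact commute_aux F (op1_commute F (aNeg_commute F i j))
    (op1_op2_commute F (aNeg F i) (aNeg F j)) (op1_op2_commute F (aNeg F j) (aNeg F i)).symm
    (op2_commute F (aNeg_commute F i j))

lemma cPos_commute (κ : ℕ+ → F) (i j : ℕ+) : Commute (cPos F q κ i) (cPos F q κ j) := by
  unfold cPos
  exact commute_aux F (op1_commute F (aPos_commute F κ i j))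
    (op1_op2_commute F (aPos F κ i) (aPos F κ j))
    (op1_op2_commute F (aPos F κ j) (aPos F κ i)).symm
    (op2_commute F (aPos_commute F κ i j))

/-- `c*_μ := (1/m(μ)!) ∏_{r∈μ} c_{-r}`. -/
def cStar (μ : Multiset ℕ+) : Module.End F (PP F ⊗[F] PP F) :=
  ((mfact μ : F))⁻¹ • opProd (cNeg F q) (cNeg_commute F q) μ

/-- `c_μ := (1/m(μ)!) ∏_{r∈μ} c_r`. -/
def cLow (κ : ℕ+ → F) (μ : Multiset ℕ+) : Module.End F (PP F ⊗[F] PP F) :=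
  ((mfact μ : F))⁻¹ • opProd (cPos F q κ) (cPos_commute F q κ) μ

/-!
Multiplying `c_{±r}` by `q ^ r` gives `a_{±r} ⊗ 1 - q ^ r (1 ⊗ a_{±r})`, a sum of two commuting
operators. Divided products `D_α(x) = (1/m(α)!) ∏_{r ∈ α} x_r` of commuting families obey the
binomial rule `D_α(x + y) = ∑_{ν ≤ α} D_ν(x) D_{α - ν}(y)`, because `ν` occurs in the powerset of
`α` exactly `m(α)! / (m(ν)! m(α - ν)!)` times. Hence `q ^ |α| c*_α` and `q ^ |β| c_β` expand into
sums of `a*_μ ⊗ a*_{α - μ}` and `a_ν ⊗ a_{β - ν}`; multiplying the two expansions gives the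
identity for each pair `(α, β)`, and summing against `G` gives the theorem.
-/

section OpProd

variable {M : Type*} [Monoid M] (f : ℕ+ → M) (hf : ∀ i j, Commute (f i) (f j))

lemma opProd_zero : opProd f hf 0 = 1 := rfl

lemma opProd_cons_s8 (a : ℕ+) (μ : Multiset ℕ+) :
    opProd f hf (a ::ₘ μ) = f a * opProd f hf μ := by
  simp [opProd, Multiset.noncommProd_cons]

lemma Commute.opProd_right {y : M} (h : ∀ i, Commute y (f i)) (μ : Multiset ℕ+) :
    Commute y (opProd f hf μ) :=
  Multiset.noncommProd_commute _ _ _ fun _ hx => by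
    obtain ⟨i, -, rfl⟩ := Multiset.mem_map.mp hx
    exact h i

lemma map_opProd {N G : Type*} [Monoid N] [FunLike G M N] [MonoidHomClass G M N] (φ : G)
    (μ : Multiset ℕ+) :
    φ (opProd f hf μ) = opProd (fun r => φ (f r)) (fun i j => (hf i j).map φ) μ := by
  induction μ using Multiset.induction with
  | empty => exact map_one φ
  | cons a s ih => rw [opProd_cons_s8, opProd_cons_s8, map_mul, ih]

lemma opProd_smul {S : Type*} [CommMonoid S] [MulAction S M] [IsScalarTower S M M]
    [SMulCommClass S M M] (c : ℕ+ → S) (hcf : ∀ i j, Commute (c i • f i) (c j • f j))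
    (μ : Multiset ℕ+) :
    opProd (fun r => c r • f r) hcf μ = (μ.map c).prod • opProd f hf μ := by
  induction μ using Multiset.induction with
  | empty => simp [opProd_zero]
  | cons a s ih =>
    rw [opProd_cons_s8, opProd_cons_s8, ih, Multiset.map_cons, Multiset.prod_cons, smul_mul_smul_comm]

end OpProd

lemma opProd_add {M : Type*} [Semiring M] (f g : ℕ+ → M)
    (hff : ∀ i j, Commute (f i) (f j)) (hgg : ∀ i j, Commute (g i) (g j))
    (hfg : ∀ i j, Commute (f i) (g j)) (hsum : ∀ i j, Commute (f i + g i) (f j + g j))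
    (α : Multiset ℕ+) :
    opProd (fun r => f r + g r) hsum α =
      (α.powerset.map fun ν => opProd f hff ν * opProd g hgg (α - ν)).sum := by
  induction α using Multiset.induction with
  | empty => simp [opProd_zero]
  | cons a s ih =>
    rw [opProd_cons_s8, ih, add_mul, add_comm, Multiset.powerset_cons, Multiset.map_add,
      Multiset.sum_add, Multiset.map_map, ← Multiset.sum_map_mul_left,
      ← Multiset.sum_map_mul_left]
    congr 1
    · refine congrArg Multiset.sum (Multiset.map_congr rfl fun ν hν => ?_)
      have hg : Commute (g a) (opProd f hff ν) :=
        Commute.opProd_right f hff (fun i => (hfg i a).symm) ν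
      rw [Multiset.cons_sub_of_le a (Multiset.mem_powerset.mp hν), opProd_cons_s8, ← mul_assoc,
        hg.eq, mul_assoc]
    · refine congrArg Multiset.sum (Multiset.map_congr rfl fun ν _ => ?_)
      rw [Function.comp_apply, opProd_cons_s8, Multiset.sub_cons, Multiset.erase_cons_head,
        mul_assoc]

lemma mfact_eq_prod {μ : Multiset ℕ+} {T : Finset ℕ+} (h : μ.toFinset ⊆ T) :
    mfact μ = ∏ r ∈ T, (μ.count r).factorial :=
  Finset.prod_subset h fun r _ hr => by
    rw [Multiset.count_eq_zero_of_notMem (by simpa using hr), Nat.factorial_zero]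

lemma mfact_pos (μ : Multiset ℕ+) : 0 < mfact μ :=
  mfact_eq_prod (subset_refl _) ▸ Finset.prod_pos fun _ _ => Nat.factorial_pos _

lemma count_powerset {T : Finset ℕ+} {α ν : Multiset ℕ+} (hα : α.toFinset ⊆ T)
    (hν : ν.toFinset ⊆ T) :
    α.powerset.count ν = ∏ r ∈ T, (α.count r).choose (ν.count r) := by
  induction α using Multiset.induction generalizing ν with
  | empty =>
    rw [Multiset.powerset_zero, Multiset.count_singleton]
    rcases Multiset.empty_or_exists_mem ν with rfl | ⟨a, ha⟩
    · simp
    · rw [if_neg (by rintro rfl; exact Multiset.notMem_zero a ha), eq_comm,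
        Finset.prod_eq_zero (hν (Multiset.mem_toFinset.2 ha))]
      simp [Nat.choose_eq_zero_of_lt, Multiset.count_pos.2 ha]
  | cons a s ih =>
    have haT : a ∈ T := hα (by simp)
    have hsT : s.toFinset ⊆ T :=
      (Multiset.toFinset_subset.2 (Multiset.subset_cons s a)).trans hα
    have hcount (μ : Multiset ℕ+) : ∏ r ∈ T.erase a, ((a ::ₘ s).count r).choose (μ.count r) =
        ∏ r ∈ T.erase a, (s.count r).choose (μ.count r) :=
      Finset.prod_congr rfl fun r hr => by
        rw [Multiset.count_cons_of_ne (Finset.ne_of_mem_erase hr)]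
    rw [Multiset.powerset_cons, Multiset.count_add]
    by_cases ha : a ∈ ν
    · obtain ⟨ν, rfl⟩ := Multiset.exists_cons_of_mem ha
      have hν' : ν.toFinset ⊆ T :=
        (Multiset.toFinset_subset.2 (Multiset.subset_cons ν a)).trans hν
      have hrest : ∏ r ∈ T.erase a, (s.count r).choose ((a ::ₘ ν).count r) =
          ∏ r ∈ T.erase a, (s.count r).choose (ν.count r) :=
        Finset.prod_congr rfl fun r hr => by
          rw [Multiset.count_cons_of_ne (Finset.ne_of_mem_erase hr)]
      rw [Multiset.count_map_eq_count' _ _ (fun _ _ => (Multiset.cons_inj_right a).1),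
        ih hsT hν, ih hsT hν', ← Finset.mul_prod_erase T _ haT, ← Finset.mul_prod_erase T _ haT,
        ← Finset.mul_prod_erase T _ haT, hcount, hrest]
      simp only [Multiset.count_cons_self]
      rw [Nat.choose_succ_succ, add_mul, add_comm]
    · have hmap : (s.powerset.map (a ::ₘ ·)).count ν = 0 :=
        Multiset.count_eq_zero.2 fun h => by
          obtain ⟨τ, -, rfl⟩ := Multiset.mem_map.1 h
          exact ha (Multiset.mem_cons_self a τ)
      rw [hmap, add_zero, ih hsT hν, ← Finset.mul_prod_erase T _ haT,
        ← Finset.mul_prod_erase T _ haT, hcount, Multiset.count_cons_self,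
        Multiset.count_eq_zero_of_notMem ha, Nat.choose_zero_right, Nat.choose_zero_right]

lemma mfact_eq_count_powerset_mul {α ν : Multiset ℕ+} (h : ν ≤ α) :
    mfact α = α.powerset.count ν * (mfact ν * mfact (α - ν)) := by
  have hνT : ν.toFinset ⊆ α.toFinset := Multiset.toFinset_subset.2 (Multiset.subset_of_le h)
  have hρT : (α - ν).toFinset ⊆ α.toFinset :=
    Multiset.toFinset_subset.2 (Multiset.subset_of_le (Multiset.sub_le_self _ _))
  rw [count_powerset (subset_refl _) hνT, mfact_eq_prod (subset_refl _), mfact_eq_prod hνT,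
    mfact_eq_prod hρT, ← Finset.prod_mul_distrib, ← Finset.prod_mul_distrib]
  refine Finset.prod_congr rfl fun r _ => ?_
  rw [Multiset.count_sub, ← Nat.choose_mul_factorial_mul_factorial (Multiset.le_iff_count.1 h r),
    mul_assoc]

def dividedProd (R : Type*) {M : Type*} [Field R] [Semiring M] [Algebra R M] (f : ℕ+ → M)
    (hf : ∀ i j, Commute (f i) (f j)) (μ : Multiset ℕ+) : M :=
  (mfact μ : R)⁻¹ • opProd f hf μ

section DividedProd

variable {R M : Type*} [Field R] [Semiring M] [Algebra R M]

lemma map_dividedProd {N : Type*} [Semiring N] [Algebra R N] (φ : M →ₐ[R] N) (f : ℕ+ → M)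
    (hf : ∀ i j, Commute (f i) (f j)) (μ : Multiset ℕ+) :
    φ (dividedProd R f hf μ) =
      dividedProd R (fun r => φ (f r)) (fun i j => (hf i j).map φ) μ := by
  rw [dividedProd, map_smul, map_opProd]
  rfl

lemma dividedProd_smul (c : ℕ+ → R) (f : ℕ+ → M) (hf : ∀ i j, Commute (f i) (f j))
    (hcf : ∀ i j, Commute (c i • f i) (c j • f j)) (μ : Multiset ℕ+) :
    dividedProd R (fun r => c r • f r) hcf μ = (μ.map c).prod • dividedProd R f hf μ := by
  rw [dividedProd, dividedProd, opProd_smul f hf, smul_comm]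

lemma dividedProd_add [CharZero R] (f g : ℕ+ → M)
    (hff : ∀ i j, Commute (f i) (f j)) (hgg : ∀ i j, Commute (g i) (g j))
    (hfg : ∀ i j, Commute (f i) (g j)) (hsum : ∀ i j, Commute (f i + g i) (f j + g j))
    (α : Multiset ℕ+) :
    dividedProd R (fun r => f r + g r) hsum α =
      ∑ ν ∈ α.powerset.toFinset, dividedProd R f hff ν * dividedProd R g hgg (α - ν) := by
  rw [dividedProd, opProd_add f g hff hgg hfg hsum, Finset.sum_multiset_map_count,
    Finset.smul_sum]
  refine Finset.sum_congr rfl fun ν hν => ?_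
  have hle : ν ≤ α := Multiset.mem_powerset.1 (Multiset.mem_toFinset.1 hν)
  have hcount : α.powerset.count ν ≠ 0 := Multiset.count_ne_zero.2 (Multiset.mem_powerset.2 hle)
  rw [dividedProd, dividedProd, smul_mul_smul_comm, ← Nat.cast_smul_eq_nsmul R, smul_smul,
    mfact_eq_count_powerset_mul hle]
  have hν0 : (mfact ν : R) ≠ 0 := Nat.cast_ne_zero.2 (mfact_pos ν).ne'
  have hρ0 : (mfact (α - ν) : R) ≠ 0 := Nat.cast_ne_zero.2 (mfact_pos (α - ν)).ne'
  congr 1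
  push_cast
  field_simp

lemma dividedProd_congr {f g : ℕ+ → M} (h : f = g) (hf : ∀ i j, Commute (f i) (f j))
    (hg : ∀ i j, Commute (g i) (g j)) (μ : Multiset ℕ+) :
    dividedProd R f hf μ = dividedProd R g hg μ := by
  subst h
  rfl

end DividedProd

lemma msum_cons (a : ℕ+) (μ : Multiset ℕ+) : msum (a ::ₘ μ) = a + msum μ := by
  simp [msum]

section Scalars

variable {R : Type*} [CommRing R]

lemma prod_map_pow_eq_pow_msum (q : R) (μ : Multiset ℕ+) :
    (μ.map fun r : ℕ+ => q ^ (r : ℕ)).prod = q ^ msum μ := by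
  induction μ using Multiset.induction with
  | empty => simp [msum]
  | cons a s ih => rw [Multiset.map_cons, Multiset.prod_cons, ih, msum_cons, pow_add]

lemma prod_map_neg_pow (q : R) (μ : Multiset ℕ+) :
    (μ.map fun r : ℕ+ => -q ^ (r : ℕ)).prod = (-1) ^ Multiset.card μ * q ^ msum μ := by
  induction μ using Multiset.induction with
  | empty => simp [msum]
  | cons a s ih =>
    rw [Multiset.map_cons, Multiset.prod_cons, ih, Multiset.card_cons, msum_cons, pow_add,
      pow_succ]
    ring

end Scalars

lemma pow_msum_smul_dividedProd_sub {R M A : Type*} [Field R] [CharZero R] [Ring M]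
    [Algebra R M] [Semiring A] [Algebra R A]
    {q : R} (hq : q ≠ 0) (φ ψ : A →ₐ[R] M) (hφψ : ∀ x y, Commute (φ x) (ψ y)) (a : ℕ+ → A)
    (ha : ∀ i j, Commute (a i) (a j))
    (hC : ∀ i j : ℕ+, Commute ((q⁻¹) ^ (i : ℕ) • φ (a i) - ψ (a i))
      ((q⁻¹) ^ (j : ℕ) • φ (a j) - ψ (a j))) (α : Multiset ℕ+) :
    q ^ msum α • dividedProd R (fun r => (q⁻¹) ^ (r : ℕ) • φ (a r) - ψ (a r)) hC α =
      ∑ μ ∈ α.powerset.toFinset, ((-1) ^ Multiset.card (α - μ) * q ^ msum (α - μ)) •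
        (φ (dividedProd R a ha μ) * ψ (dividedProd R a ha (α - μ))) := by
  have hff (i j : ℕ+) : Commute (φ (a i)) (φ (a j)) := (ha i j).map φ
  have hψ (i j : ℕ+) : Commute (ψ (a i)) (ψ (a j)) := (ha i j).map ψ
  have hgg (i j : ℕ+) : Commute ((-q ^ (i : ℕ)) • ψ (a i)) ((-q ^ (j : ℕ)) • ψ (a j)) :=
    ((hψ i j).smul_left _).smul_right _
  have hfg (i j : ℕ+) : Commute (φ (a i)) ((-q ^ (j : ℕ)) • ψ (a j)) :=
    (hφψ (a i) (a j)).smul_right _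
  have hsum (i j : ℕ+) : Commute (φ (a i) + (-q ^ (i : ℕ)) • ψ (a i))
      (φ (a j) + (-q ^ (j : ℕ)) • ψ (a j)) :=
    ((hff i j).add_right (hfg i j)).add_left ((hfg j i).symm.add_right (hgg i j))
  have hcf (i j : ℕ+) : Commute (q ^ (i : ℕ) • ((q⁻¹) ^ (i : ℕ) • φ (a i) - ψ (a i)))
      (q ^ (j : ℕ) • ((q⁻¹) ^ (j : ℕ) • φ (a j) - ψ (a j))) :=
    ((hC i j).smul_left _).smul_right _
  have hscale : (fun r : ℕ+ => q ^ (r : ℕ) • ((q⁻¹) ^ (r : ℕ) • φ (a r) - ψ (a r))) =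
      fun r => φ (a r) + (-q ^ (r : ℕ)) • ψ (a r) := by
    funext r
    rw [smul_sub, smul_smul, ← mul_pow, mul_inv_cancel₀ hq, one_pow, one_smul, neg_smul,
      sub_eq_add_neg]
  calc q ^ msum α • dividedProd R (fun r => (q⁻¹) ^ (r : ℕ) • φ (a r) - ψ (a r)) hC α
      = dividedProd R (fun r => q ^ (r : ℕ) • ((q⁻¹) ^ (r : ℕ) • φ (a r) - ψ (a r))) hcf α := by
        rw [dividedProd_smul _ _ hC, prod_map_pow_eq_pow_msum]
    _ = dividedProd R (fun r => φ (a r) + (-q ^ (r : ℕ)) • ψ (a r)) hsum α :=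
        dividedProd_congr hscale _ _ α
    _ = ∑ μ ∈ α.powerset.toFinset, dividedProd R (fun r => φ (a r)) hff μ *
          dividedProd R (fun r => (-q ^ (r : ℕ)) • ψ (a r)) hgg (α - μ) :=
        dividedProd_add _ _ hff hgg hfg hsum α
    _ = _ := Finset.sum_congr rfl fun μ _ => by
        rw [dividedProd_smul _ _ hψ, prod_map_neg_pow, mul_smul_comm, map_dividedProd,
          map_dividedProd]

open Module.End in
lemma pow_msum_add_smul_cStar_mul_cLow (hq : q ≠ 0) (κ : ℕ+ → F) (α β : Multiset ℕ+) :
    q ^ (msum α + msum β) • (cStar F q α * cLow F q κ β) =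
      ∑ μ ∈ α.powerset.toFinset, ∑ ν ∈ β.powerset.toFinset,
        ((-1) ^ (Multiset.card (α - μ) + Multiset.card (β - ν)) *
            q ^ (msum (α - μ) + msum (β - ν))) •
          (TensorProduct.map (aStar F μ * aLow F κ ν) (aStar F (α - μ) * aLow F κ (β - ν)) :
            Module.End F (PP F ⊗[F] PP F)) := by
  have hφψ (x y : Module.End F (PP F)) :
      Commute (rTensorAlgHom F (PP F) (PP F) x) (lTensorAlgHom F (PP F) (PP F) y) :=
    op1_op2_commute F x y
  -- `(e :)` elaborates `e` on its own and only then unfolds `cStar`, `cLow`, `op1`, `op2` to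
  -- match it; elaborating against the expected type triggers costly higher-order unification.
  have hstar : q ^ msum α • cStar F q α = ∑ μ ∈ α.powerset.toFinset,
      ((-1) ^ Multiset.card (α - μ) * q ^ msum (α - μ)) •
        (op1 F (aStar F μ) * op2 F (aStar F (α - μ))) :=
    (pow_msum_smul_dividedProd_sub (M := Module.End F (PP F ⊗[F] PP F))
      (A := Module.End F (PP F)) hq (rTensorAlgHom F (PP F) (PP F))
      (lTensorAlgHom F (PP F) (PP F)) hφψ (aNeg F) (aNeg_commute F) (cNeg_commute F q) α :)
  have hlow : q ^ msum β • cLow F q κ β = ∑ ν ∈ β.powerset.toFinset,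
      ((-1) ^ Multiset.card (β - ν) * q ^ msum (β - ν)) •
        (op1 F (aLow F κ ν) * op2 F (aLow F κ (β - ν))) :=
    (pow_msum_smul_dividedProd_sub (M := Module.End F (PP F ⊗[F] PP F))
      (A := Module.End F (PP F)) hq (rTensorAlgHom F (PP F) (PP F))
      (lTensorAlgHom F (PP F) (PP F)) hφψ (aPos F κ) (aPos_commute F κ) (cPos_commute F q κ) β :)
  have hsplit (x y : Module.End F (PP F)) : op1 F x * op2 F y = TensorProduct.map x y := by
    unfold op1 op2
    rw [← TensorProduct.map_mul]
    rfl
  have hmap (x y z w : Module.End F (PP F)) :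
      op1 F x * op2 F y * (op1 F z * op2 F w) = TensorProduct.map (x * z) (y * w) := by
    rw [hsplit, hsplit, TensorProduct.map_mul]
  rw [pow_add, ← smul_mul_smul_comm, hstar, hlow, Finset.sum_mul_sum]
  refine Finset.sum_congr rfl fun μ _ => Finset.sum_congr rfl fun ν _ => ?_
  rw [smul_mul_smul_comm, hmap, pow_add, pow_add]
  congr 1
  ring

/-- Proposition 4.3 of the paper, finite-support form: for a finitely
supported family `G(μ,ν)`, setting
`F(μ,ρ,ν,σ) := (−1)^{ℓ(ρ)+ℓ(σ)} q^{|ρ|+|σ|} G(μ∪ρ, ν∪σ)` one has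
`∑_{μ,ρ,ν,σ} F(μ,ρ,ν,σ) (a*_μ ∘ a_ν) ⊗ (a*_ρ ∘ a_σ) = ∑_{μ,ν} q^{|μ|+|ν|} G(μ,ν) c*_μ ∘ c_ν`.
The left-hand side is organized as a sum over `(α,β)` in the support of `G` and over the
decompositions `α = μ ∪ ρ` (with `μ ⊆ α`, `ρ = α∖μ`) and `β = ν ∪ σ`. -/
theorem statement8 (F : Type*) [Field F] [CharZero F] (q : F) (hq : q ≠ 0)
    (κ : ℕ+ → F) (G : (Multiset ℕ+ × Multiset ℕ+) →₀ F) :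
    (G.sum fun p g =>
      ∑ μ ∈ p.1.powerset.toFinset, ∑ ν ∈ p.2.powerset.toFinset,
        (((-1 : F) ^ (Multiset.card (p.1 - μ) + Multiset.card (p.2 - ν))) *
            q ^ (msum (p.1 - μ) + msum (p.2 - ν)) * g) •
          (TensorProduct.map (aStar F μ * aLow F κ ν)
              (aStar F (p.1 - μ) * aLow F κ (p.2 - ν)) :
            Module.End F (PP F ⊗[F] PP F))) =
    G.sum fun p g =>
      (q ^ (msum p.1 + msum p.2) * g) • (cStar F q p.1 * cLow F q κ p.2) := by
  refine Finsupp.sum_congr fun p _ => ?_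
  rw [mul_comm _ (G p), ← smul_smul, pow_msum_add_smul_cStar_mul_cLow F q hq κ p.1 p.2]
  simp only [Finset.smul_sum, smul_smul, mul_comm (G p)]
end
end

section
/- (Functional equation characterizing the single-variable Macdonald Cauchy kernel, eq. (5.15) of the paper.) Let A be a commutative ℚ-algebra and q, t ∈ A such that 1 − q^r is invertible in A for every r ≥ 1. Define Π := exp(∑_{r≥1} ((1−t^r)/(r(1−q^r))) · u^r) ∈ A[[u]], where exp(f) := ∑_{n≥0} f^n/n! for f with zero constant term. Then (1 − u)·Π = (1 − t u)·Π(qu), where Π(qu) denotes the power series obtained from Π by the rescaling u ↦ qu (Mathlib: PowerSeries.rescale q Π). This functional equation encodes the product formula Π = (tu;q)_∞/(u;q)_∞ for the Cauchy kernel. -/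
/-- The exponential `exp(f) := ∑_{n≥0} f^n/n!` of a formal power series `f` with zero
constant term over a commutative `ℚ`-algebra. -/
noncomputable def expPS {A : Type*} [CommRing A] [Algebra ℚ A] (f : PowerSeries A) :
    PowerSeries A :=
  PowerSeries.mk fun d =>
    ∑ n ∈ Finset.range (d + 1), ((n.factorial : ℚ))⁻¹ • PowerSeries.coeff d (f ^ n)

/-- The single-variable Macdonald Cauchy kernel
`Π := exp(∑_{r≥1} ((1−t^r)/(r(1−q^r))) u^r)`, where `1/(1−q^r)` is `Ring.inverse`
(the genuine inverse whenever `1 − q^r` is a unit). -/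
noncomputable def cauchyKernel {A : Type*} [CommRing A] [Algebra ℚ A] (q t : A) :
    PowerSeries A :=
  expPS (PowerSeries.mk fun r =>
    if r = 0 then 0 else ((r : ℚ))⁻¹ • ((1 - t ^ r) * Ring.inverse (1 - q ^ r)))

/-
Writing `Π = exp φ`, both sides `F = (1 - u) Π` and `G = (1 - t u) Π(qu)` have constant term `1`,
and their logarithmic derivatives agree: `F'/F - G'/G = φ'(u) - q φ'(qu) - 1/(1-u) + t/(1-tu)`,
which vanishes because `φ(u) - φ(qu) = -log(1-u) + log(1-tu)`, the factors `1 - qʳ` cancelling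
the denominators of `φ`. Over a `ℚ`-algebra a power series is determined by its derivative and
constant term, so `F = G`.
-/

open PowerSeries

namespace PowerSeries

theorem coeff_pow_eq_zero_of_lt {R : Type*} [Semiring R] {f : R⟦X⟧} (hf : constantCoeff f = 0) {d n : ℕ}
    (hdn : d < n) : coeff d (f ^ n) = 0 :=
  coeff_of_lt_order d ((Nat.cast_lt.2 hdn).trans_le (le_order_pow_of_constantCoeff_eq_zero n hf))

theorem one_sub_C_mul_X_mul_mk_pow {R : Type*} [CommRing R] (a : R) :
    (1 - C a * X) * mk (a ^ ·) = 1 := by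
  have := congrArg (rescale a) (mk_one_mul_one_sub_eq_one R)
  simpa only [map_mul, map_sub, map_one, rescale_X, rescale_mk, Pi.one_apply, mul_one,
    mul_comm (mk _)] using this

theorem eq_of_derivative_mul_eq_mul_derivative {R : Type*} [CommRing R] [IsAddTorsionFree R]
    {F G : R⟦X⟧} (hG : IsUnit G) (h0 : constantCoeff F = constantCoeff G)
    (h : d⁄dX R F * G = F * d⁄dX R G) : F = G := by
  obtain ⟨u, rfl⟩ := hG
  have hu : (↑u⁻¹ : R⟦X⟧) * u = 1 := u.inv_mul
  suffices F * ↑u⁻¹ = 1 by rw [← mul_one F, ← hu, ← mul_assoc, this, one_mul]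
  refine derivative.ext ?_ ?_
  · rw [Derivation.leibniz, derivative_inv, derivative_one, smul_eq_mul, smul_eq_mul]
    linear_combination (↑u⁻¹ : R⟦X⟧) ^ 2 * h - (↑u⁻¹ * d⁄dX R F) * hu
  · rw [map_mul, h0, ← map_mul, mul_comm, hu]

variable {A : Type*} [CommRing A] [Algebra ℚ A]

theorem expPS_eq_subst {f : A⟦X⟧} (hf : constantCoeff f = 0) : expPS f = (exp A).subst f := by
  ext d
  rw [expPS, coeff_mk, coeff_subst' (HasSubst.of_constantCoeff_zero' hf),
    finsum_eq_sum_of_support_subset _ (s := Finset.range (d + 1)) ?_]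
  · refine Finset.sum_congr rfl fun n _ => ?_
    rw [coeff_exp, algebraMap_smul, one_div]
  · intro n hn
    rw [Function.mem_support] at hn
    rw [Finset.coe_range, Set.mem_Iio, Nat.lt_succ_iff]
    by_contra! hdn
    exact hn (by rw [coeff_pow_eq_zero_of_lt hf hdn, smul_zero])

theorem constantCoeff_expPS (f : A⟦X⟧) : constantCoeff (expPS f) = 1 := by
  rw [← coeff_zero_eq_constantCoeff_apply, expPS, coeff_mk]
  simp

theorem derivative_expPS {f : A⟦X⟧} (hf : constantCoeff f = 0) :
    d⁄dX A (expPS f) = expPS f * d⁄dX A f := by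
  rw [expPS_eq_subst hf, derivative_subst (HasSubst.of_constantCoeff_zero' hf), derivative_exp]

theorem rescale_expPS (a : A) (f : A⟦X⟧) : rescale a (expPS f) = expPS (rescale a f) := by
  ext d
  simp only [expPS, coeff_rescale, coeff_mk, ← map_pow, Finset.mul_sum, mul_smul_comm]

/-- `-log (1 - a X)` -/
noncomputable def negLogOneSub (a : A) : A⟦X⟧ :=
  mk fun r => if r = 0 then 0 else (r : ℚ)⁻¹ • a ^ r

theorem one_sub_C_mul_X_mul_derivative_negLogOneSub (a : A) :
    (1 - C a * X) * d⁄dX A (negLogOneSub a) = C a := by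
  have hderiv : d⁄dX A (negLogOneSub a) = C a * mk (a ^ ·) := by
    ext n
    have hn : ((n : A) + 1) = algebraMap ℚ A (n + 1) := by simp
    rw [coeff_derivative, negLogOneSub, coeff_mk, if_neg n.succ_ne_zero, coeff_C_mul, coeff_mk,
      hn, Algebra.smul_def, mul_right_comm, ← map_mul, ← Nat.cast_succ,
      inv_mul_cancel₀ (by positivity), map_one, one_mul, pow_succ']
  rw [hderiv, mul_left_comm, one_sub_C_mul_X_mul_mk_pow, mul_one]

end PowerSeries

section CauchyKernel

variable {A : Type*} [CommRing A] [Algebra ℚ A]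

noncomputable def cauchyExponent (q t : A) : A⟦X⟧ :=
  mk fun r => if r = 0 then 0 else (r : ℚ)⁻¹ • ((1 - t ^ r) * Ring.inverse (1 - q ^ r))

theorem cauchyKernel_eq_expPS (q t : A) : cauchyKernel q t = expPS (cauchyExponent q t) := rfl

theorem constantCoeff_cauchyExponent (q t : A) : constantCoeff (cauchyExponent q t) = 0 := by
  rw [← coeff_zero_eq_constantCoeff_apply, cauchyExponent, coeff_mk, if_pos rfl]

theorem cauchyExponent_sub_rescale {q : A} (t : A) (h : ∀ r : ℕ, 1 ≤ r → IsUnit (1 - q ^ r)) :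
    cauchyExponent q t - rescale q (cauchyExponent q t) = negLogOneSub 1 - negLogOneSub t := by
  ext r
  simp only [map_sub, coeff_rescale, cauchyExponent, negLogOneSub, coeff_mk]
  rcases Nat.eq_zero_or_pos r with rfl | hr
  · simp
  · simp only [if_neg hr.ne', one_pow, ← smul_sub, ← one_sub_mul, mul_smul_comm]
    rw [mul_left_comm, Ring.mul_inverse_cancel _ (h r hr), mul_one]

end CauchyKernel

/-- functional equation characterizing the single-variable Macdonald
Cauchy kernel, eq. (5.15) of the paper: if `1 − q^r` is invertible for every `r ≥ 1`,
then `(1 − u)·Π = (1 − t u)·Π(qu)`. -/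
theorem statement12 (A : Type*) [CommRing A] [Algebra ℚ A] (q t : A)
    (h : ∀ r : ℕ, 1 ≤ r → IsUnit (1 - q ^ r)) :
    (1 - PowerSeries.X) * cauchyKernel q t =
      (1 - PowerSeries.C t * PowerSeries.X) *
        PowerSeries.rescale q (cauchyKernel q t) := by
  have : IsAddTorsionFree A := .of_module_rat A
  rw [cauchyKernel_eq_expPS, rescale_expPS]
  set φ := cauchyExponent q t
  have hφ : constantCoeff φ = 0 := constantCoeff_cauchyExponent q t
  have hψ : constantCoeff (rescale q φ) = 0 := by
    rw [← coeff_zero_eq_constantCoeff_apply, coeff_rescale, coeff_zero_eq_constantCoeff, hφ,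
      mul_zero]
  have hlog : (1 - X) * (1 - C t * X) * (d⁄dX A φ - d⁄dX A (rescale q φ)) = 1 - C t := by
    have h1 := one_sub_C_mul_X_mul_derivative_negLogOneSub (1 : A)
    have ht := one_sub_C_mul_X_mul_derivative_negLogOneSub t
    rw [map_one, one_mul] at h1
    rw [← map_sub, cauchyExponent_sub_rescale t h, map_sub]
    linear_combination (1 - C t * X) * h1 - (1 - X) * ht
  refine eq_of_derivative_mul_eq_mul_derivative ?_ ?_ ?_
  · rw [isUnit_iff_constantCoeff]
    simp [constantCoeff_expPS]
  · simp [constantCoeff_expPS]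
  · simp only [Derivation.leibniz, derivative_expPS hφ, derivative_expPS hψ, smul_eq_mul, map_sub,
      derivative_X, derivative_one, derivative_C]
    linear_combination expPS φ * expPS (rescale q φ) * hlog
end
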